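/- Let c1 < 0 < c0, λ0, λ1 > 0, y0 ≤ 0, y1 = −y0, and set a = 1/c0 > 0, b = 1/c1 < 0, α = λ0/c0 > 0, β = λ1/c1 < 0, and assume α + β < 0 (i.e., λ0/c0 + λ1/c1 < 0). Define f0(t) = ((a − b e^{−y0})^{−α−β}/B(−α−β, α)) (t−a)^{α−1} (t − b e^{−y0})^{β} 1_{t > a} and f1(t) = ((a e^{−y1} − b)^{−α−β}/B(−α−β, α+1)) (t − a e^{−y1})^{α} (t − b)^{β−1} 1_{t > a e^{−y1}}. Then f0 and f1 are probability density functions, and they satisfy: for all t > a, f0(t) = α (t−a)^{α−1} ∫_{t e^{y0}}^{∞} (u e^{−y0} − a)^{−α} f1(u) du; and for all t > a e^{−y1}, f1(t) = −β (t−b)^{β−1} ∫_{a}^{t e^{y1}} (u e^{−y1} − b)^{−β} f0(u) du. -/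

import Mathlib

open MeasureTheory intervalIntegral

/-- The Beta function `B(x,y) = Γ(x)Γ(y)/Γ(x+y)`. -/
noncomputable def realBeta (x y : ℝ) : ℝ := Real.Gamma x * Real.Gamma y / Real.Gamma (x + y)

/-!
Both densities belong to the family `g_{A,B,p,r}(t) ∝ (t - A) ^ (p - 1) * (t - B) ^ r` on `(A, ∞)`,
`B < A`, which the substitution `t = B + (A - B) / u` normalises by a Beta integral:
`f0 = g_{a, b e^{-y0}, α, β}`, and `f1` is `g_{a, b e^{-y0}, α + 1, β - 1}` rescaled by `e^{y0}`.
Since the jumps act multiplicatively, this rescaling absorbs them and reduces the coupled system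
to its jump-free form, in which each right-hand side is an elementary power integral
(of `(u - B) ^ (β - 1)` over `(t, ∞)`, resp. of `(u - A) ^ (α - 1)` over `(A, t)`). The constants
then match by the recurrence `(γ + α) B(γ, α + 1) = α B(γ, α)` with `γ = -(α + β)`.
-/

open Set Real

lemma realBeta_pos {x y : ℝ} (hx : 0 < x) (hy : 0 < y) : 0 < realBeta x y :=
  ProbabilityTheory.beta_pos hx hy

lemma add_mul_realBeta_add_one {x y : ℝ} (hx : 0 < x) (hy : 0 < y) :
    (x + y) * realBeta x (y + 1) = y * realBeta x y := by
  have hxy : Gamma (x + y) ≠ 0 := (Gamma_pos_of_pos (add_pos hx hy)).ne'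
  rw [realBeta, realBeta, Gamma_add_one hy.ne', ← add_assoc, Gamma_add_one (add_pos hx hy).ne']
  field_simp

lemma integral_rpow_mul_one_sub_rpow {p q : ℝ} (hp : 0 < p) (hq : 0 < q) :
    ∫ u in (0 : ℝ)..1, u ^ (p - 1) * (1 - u) ^ (q - 1) = realBeta p q := by
  have hcast : ∀ u ∈ uIcc (0 : ℝ) 1, ((u ^ (p - 1) * (1 - u) ^ (q - 1) : ℝ) : ℂ)
      = (u : ℂ) ^ ((p : ℂ) - 1) * (1 - (u : ℂ)) ^ ((q : ℂ) - 1) := by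
    intro u hu
    rw [uIcc_of_le zero_le_one] at hu
    rw [Complex.ofReal_mul, Complex.ofReal_cpow hu.1, Complex.ofReal_cpow (by linarith [hu.2])]
    push_cast
    rfl
  rw [realBeta, ← ProbabilityTheory.beta, ProbabilityTheory.beta_eq_betaIntegralReal p q hp hq,
    Complex.betaIntegral, ← intervalIntegral.integral_congr hcast, intervalIntegral.integral_ofReal,
    Complex.ofReal_re]

lemma integral_Ioi_sub_rpow_mul_sub_rpow {A B p r : ℝ} (hBA : B < A) (hp : 0 < p)
    (hpr : p + r < 0) :
    ∫ t in Ioi A, (t - A) ^ (p - 1) * (t - B) ^ r = (A - B) ^ (p + r) * realBeta (-(p + r)) p := by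
  set C := A - B with hC_def
  have hC : 0 < C := sub_pos.2 hBA
  -- `t = B + C / u` maps `(0, 1)` onto `(A, ∞)` and turns the integrand into a Beta integrand
  set φ : ℝ → ℝ := fun u ↦ B + C * u⁻¹
  have himage : φ '' Ioo 0 1 = Ioi A := by
    ext t
    constructor
    · rintro ⟨u, ⟨hu0, hu1⟩, rfl⟩
      have : C < C * u⁻¹ := lt_mul_of_one_lt_right hC ((one_lt_inv₀ hu0).2 hu1)
      simp only [φ, mem_Ioi]
      linarith
    · intro ht
      have htB : C < t - B := by simp only [mem_Ioi] at ht; linarith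
      refine ⟨C / (t - B), ⟨div_pos hC (hC.trans htB), (div_lt_one (hC.trans htB)).2 htB⟩, ?_⟩
      simp only [φ, inv_div]
      field_simp
      ring
  have hderiv : ∀ u ∈ Ioo (0 : ℝ) 1, HasDerivWithinAt φ (C * -(u ^ 2)⁻¹) (Ioo 0 1) u :=
    fun u hu ↦ (((hasDerivAt_inv hu.1.ne').const_mul C).const_add B).hasDerivWithinAt
  have hinj : InjOn φ (Ioo 0 1) := fun u _ v _ h ↦ by
    simpa [φ, hC.ne'] using h
  rw [← himage, integral_image_eq_integral_abs_deriv_smul measurableSet_Ioo hderiv hinj,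
    ← integral_rpow_mul_one_sub_rpow (by linarith) hp,
    ← intervalIntegral.integral_const_mul, intervalIntegral.integral_of_le zero_le_one,
    integral_Ioc_eq_integral_Ioo]
  refine setIntegral_congr_fun measurableSet_Ioo fun u ⟨hu0, hu1⟩ ↦ ?_
  have hv : 0 ≤ 1 - u := by linarith
  have hA : φ u - A = C * (1 - u) * u⁻¹ := by simp only [φ, hC_def]; field_simp; ring
  have hB : φ u - B = C * u⁻¹ := by simp only [φ]; ring
  have hCpow : C ^ (p + r) = C * C ^ (p - 1) * C ^ r := by
    rw [show p + r = 1 + (p - 1) + r by ring, rpow_add hC, rpow_add hC, rpow_one]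
  have hupow : u ^ (-(p + r) - 1) = (u ^ 2 * u ^ (p - 1) * u ^ r)⁻¹ := by
    rw [show -(p + r) - 1 = -(2 + (p - 1) + r) by ring, rpow_neg hu0.le, rpow_add hu0,
      rpow_add hu0, rpow_two]
  rw [smul_eq_mul, hA, hB, abs_mul, abs_neg, abs_of_pos hC, abs_of_pos (by positivity),
    mul_rpow (by positivity) (by positivity), mul_rpow hC.le hv, mul_rpow hC.le (by positivity),
    inv_rpow hu0.le, inv_rpow hu0.le, hCpow, hupow]
  have : 0 < u ^ (p - 1) := rpow_pos_of_pos hu0 _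
  have : 0 < u ^ r := rpow_pos_of_pos hu0 _
  field_simp

lemma integral_Ioi_sub_rpow {B T r : ℝ} (hBT : B < T) (hr : r < -1) :
    ∫ u in Ioi T, (u - B) ^ r = -(T - B) ^ (r + 1) / (r + 1) := by
  have himage : (· + B) '' Ioi (T - B) = Ioi T := by
    rw [image_add_const_Ioi, sub_add_cancel]
  have hderiv (x : ℝ) (_ : x ∈ Ioi (T - B)) : HasDerivWithinAt (· + B) 1 (Ioi (T - B)) x :=
    ((hasDerivAt_id x).add_const B).hasDerivWithinAt
  rw [← himage, integral_image_eq_integral_abs_deriv_smul measurableSet_Ioi hderiv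
    (add_left_injective B).injOn]
  simpa using integral_Ioi_rpow_of_lt hr (sub_pos.2 hBT)

lemma integral_sub_rpow {A T r : ℝ} (hr : -1 < r) :
    ∫ u in A..T, (u - A) ^ r = (T - A) ^ (r + 1) / (r + 1) := by
  rw [intervalIntegral.integral_comp_sub_right (· ^ r), sub_self, integral_rpow (Or.inl hr),
    zero_rpow (by linarith), sub_zero]

noncomputable def betaPrimeConst (A B p r : ℝ) : ℝ :=
  (A - B) ^ (-(p + r)) / realBeta (-(p + r)) p

/-- For `A = 1`, `B = 0` this is the Beta-prime density of `t - 1`. -/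
noncomputable def shiftedBetaPrimePDF (A B p r t : ℝ) : ℝ :=
  if A < t then betaPrimeConst A B p r * (t - A) ^ (p - 1) * (t - B) ^ r else 0

section

variable {A B p r α β s : ℝ}

lemma betaPrimeConst_pos (hBA : B < A) (hp : 0 < p) (hpr : p + r < 0) :
    0 < betaPrimeConst A B p r :=
  div_pos (rpow_pos_of_pos (sub_pos.2 hBA) _) (realBeta_pos (by linarith) hp)

lemma shiftedBetaPrimePDF_nonneg (hBA : B < A) (hp : 0 < p) (hpr : p + r < 0) (t : ℝ) :
    0 ≤ shiftedBetaPrimePDF A B p r t := by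
  unfold shiftedBetaPrimePDF
  split_ifs with ht
  · have := betaPrimeConst_pos hBA hp hpr
    have := rpow_nonneg (sub_nonneg.2 ht.le) (p - 1)
    have := rpow_nonneg (sub_nonneg.2 (hBA.trans ht).le) r
    positivity
  · exact le_rfl

lemma integral_shiftedBetaPrimePDF (hBA : B < A) (hp : 0 < p) (hpr : p + r < 0) :
    ∫ t, shiftedBetaPrimePDF A B p r t = 1 := by
  have hindicator : shiftedBetaPrimePDF A B p r = (Ioi A).indicator
      fun t ↦ betaPrimeConst A B p r * ((t - A) ^ (p - 1) * (t - B) ^ r) := by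
    ext t
    simp only [shiftedBetaPrimePDF, indicator_apply, mem_Ioi, mul_assoc]
  have hAB : 0 < A - B := sub_pos.2 hBA
  have hbeta : 0 < realBeta (-(p + r)) p := realBeta_pos (by linarith) hp
  rw [hindicator, MeasureTheory.integral_indicator measurableSet_Ioi,
    MeasureTheory.integral_const_mul,
    integral_Ioi_sub_rpow_mul_sub_rpow hBA hp hpr, betaPrimeConst, rpow_neg hAB.le]
  field_simp

lemma mul_betaPrimeConst_add_one_sub_one (hα : 0 < α) (hαβ : α + β < 0) :
    α * betaPrimeConst A B (α + 1) (β - 1) = -β * betaPrimeConst A B α β := by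
  have hrec := add_mul_realBeta_add_one (x := -(α + β)) (y := α) (by linarith) hα
  have hbeta : 0 < realBeta (-(α + β)) α := realBeta_pos (by linarith) hα
  have hbeta' : 0 < realBeta (-(α + β)) (α + 1) := realBeta_pos (by linarith) (by linarith)
  rw [betaPrimeConst, betaPrimeConst, show α + 1 + (β - 1) = α + β by ring]
  rw [show -(α + β) + α = -β by ring] at hrec
  field_simp
  linear_combination (-(A - B) ^ (-(α + β))) * hrec

lemma shiftedBetaPrimePDF_eq_mul_integral_Ioi (hBA : B < A) (hα : 0 < α) (hαβ : α + β < 0)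
    {t : ℝ} (ht : A < t) :
    shiftedBetaPrimePDF A B α β t =
      α * (t - A) ^ (α - 1) *
        ∫ u in Ioi t, (u - A) ^ (-α) * shiftedBetaPrimePDF A B (α + 1) (β - 1) u := by
  have hintegrand : EqOn (fun u ↦ (u - A) ^ (-α) * shiftedBetaPrimePDF A B (α + 1) (β - 1) u)
      (fun u ↦ betaPrimeConst A B (α + 1) (β - 1) * (u - B) ^ (β - 1)) (Ioi t) := by
    intro u (hu : t < u)
    have huA : 0 < u - A := by linarith
    dsimp only
    rw [shiftedBetaPrimePDF, if_pos (ht.trans hu), add_sub_cancel_right, rpow_neg huA.le]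
    have : 0 < (u - A) ^ α := rpow_pos_of_pos huA α
    field_simp
  rw [setIntegral_congr_fun measurableSet_Ioi hintegrand, MeasureTheory.integral_const_mul,
    integral_Ioi_sub_rpow (hBA.trans ht) (by linarith), sub_add_cancel, shiftedBetaPrimePDF,
    if_pos ht]
  have hβ : β ≠ 0 := by linarith
  have hconst := mul_betaPrimeConst_add_one_sub_one (A := A) (B := B) hα hαβ
  field_simp
  linear_combination (t - A) ^ (α - 1) * (t - B) ^ β * hconst

lemma shiftedBetaPrimePDF_add_one_eq_mul_integral (hBA : B < A) (hα : 0 < α) (hαβ : α + β < 0)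
    {t : ℝ} (ht : A < t) :
    shiftedBetaPrimePDF A B (α + 1) (β - 1) t =
      -β * (t - B) ^ (β - 1) * ∫ u in A..t, (u - B) ^ (-β) * shiftedBetaPrimePDF A B α β u := by
  have hintegrand : ∀ᵐ u, u ∈ uIoc A t →
      (u - B) ^ (-β) * shiftedBetaPrimePDF A B α β u =
        betaPrimeConst A B α β * (u - A) ^ (α - 1) := by
    refine Filter.Eventually.of_forall fun u hu ↦ ?_
    rw [uIoc_of_le ht.le] at hu
    have huB : 0 < u - B := by linarith [hu.1]
    rw [shiftedBetaPrimePDF, if_pos hu.1, rpow_neg huB.le]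
    have : 0 < (u - B) ^ β := rpow_pos_of_pos huB β
    field_simp
  rw [intervalIntegral.integral_congr_ae hintegrand, intervalIntegral.integral_const_mul,
    integral_sub_rpow (by linarith), sub_add_cancel, shiftedBetaPrimePDF, if_pos ht,
    add_sub_cancel_right]
  have hconst := mul_betaPrimeConst_add_one_sub_one (A := A) (B := B) hα hαβ
  field_simp
  linear_combination (t - A) ^ α * (t - B) ^ (β - 1) * hconst

lemma shiftedBetaPrimePDF_mul_mul (hs : 0 < s) (hBA : B ≤ A) (t : ℝ) :
    shiftedBetaPrimePDF (A * s) (B * s) p r t = s⁻¹ * shiftedBetaPrimePDF A B p r (t * s⁻¹) := by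
  unfold shiftedBetaPrimePDF
  split_ifs with h h'
  · have htA : 0 ≤ t * s⁻¹ - A := by linarith
    have hspow : s ^ (-(p + r)) * s ^ (p - 1) * s ^ r = s⁻¹ := by
      rw [← rpow_add hs, ← rpow_add hs, show -(p + r) + (p - 1) + r = -1 by ring, rpow_neg_one]
    rw [betaPrimeConst, betaPrimeConst, ← sub_mul, mul_rpow (sub_nonneg.2 hBA) hs.le,
      show t - A * s = (t * s⁻¹ - A) * s by field_simp, mul_rpow htA hs.le,
      show t - B * s = (t * s⁻¹ - B) * s by field_simp, mul_rpow (by linarith) hs.le, ← hspow]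
    ring
  · exact absurd ((lt_mul_inv_iff₀ hs).2 h) h'
  · exact absurd ((lt_mul_inv_iff₀ hs).1 ‹_›) h
  · rw [mul_zero]

lemma shiftedBetaPrimePDF_eq_mul_integral_Ioi_mul (hs : 0 < s) (hBA : B < A) (hα : 0 < α)
    (hαβ : α + β < 0) {t : ℝ} (ht : A < t) :
    shiftedBetaPrimePDF A B α β t = α * (t - A) ^ (α - 1) *
      ∫ u in Ioi (t * s), (u * s⁻¹ - A) ^ (-α) *
        shiftedBetaPrimePDF (A * s) (B * s) (α + 1) (β - 1) u := by
  simp only [shiftedBetaPrimePDF_mul_mul hs hBA.le, mul_left_comm _ s⁻¹,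
    MeasureTheory.integral_const_mul]
  rw [integral_comp_mul_right_Ioi (fun u ↦ (u - A) ^ (-α) *
      shiftedBetaPrimePDF A B (α + 1) (β - 1) u) _ (inv_pos.2 hs),
    mul_inv_cancel_right₀ hs.ne', inv_inv, smul_eq_mul,
    shiftedBetaPrimePDF_eq_mul_integral_Ioi hBA hα hαβ ht]
  field_simp

lemma shiftedBetaPrimePDF_mul_mul_add_one_eq_mul_integral (hs : 0 < s) (hBA : B < A)
    (hα : 0 < α) (hαβ : α + β < 0) {t : ℝ} (ht : A * s < t) :
    shiftedBetaPrimePDF (A * s) (B * s) (α + 1) (β - 1) t = -β * (t - B * s) ^ (β - 1) *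
      ∫ u in A..t * s⁻¹, (u * s - B * s) ^ (-β) * shiftedBetaPrimePDF A B α β u := by
  have hts : A < t * s⁻¹ := (lt_mul_inv_iff₀ hs).2 ht
  have hintegrand : EqOn (fun u ↦ (u * s - B * s) ^ (-β) * shiftedBetaPrimePDF A B α β u)
      (fun u ↦ s ^ (-β) * ((u - B) ^ (-β) * shiftedBetaPrimePDF A B α β u))
      (uIcc A (t * s⁻¹)) := by
    intro u hu
    rw [uIcc_of_le hts.le] at hu
    dsimp only
    rw [← sub_mul, mul_rpow (by linarith [hu.1]) hs.le]
    ring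
  have hspow : s ^ (β - 1) * s ^ (-β) = s⁻¹ := by
    rw [← rpow_add hs, show β - 1 + -β = -1 by ring, rpow_neg_one]
  rw [shiftedBetaPrimePDF_mul_mul hs hBA.le, intervalIntegral.integral_congr hintegrand,
    intervalIntegral.integral_const_mul,
    shiftedBetaPrimePDF_add_one_eq_mul_integral hBA hα hαβ hts,
    show t - B * s = (t * s⁻¹ - B) * s by field_simp, mul_rpow (by linarith) hs.le, ← hspow]
  ring

end

theorem jump_telegraph_exponential_functional_opposite_signs_general
    (c0 c1 l0 y0 y1 : ℝ) (hc1 : c1 < 0) (hc0 : 0 < c0)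
    (hl0 : 0 < l0) (hy1 : y1 = -y0)
    (a b α β : ℝ)
    (hadef : a = 1 / c0) (hbdef : b = 1 / c1)
    (hαdef : α = l0 / c0)
    (hconv : α + β < 0)
    (f0 f1 : ℝ → ℝ)
    (hf0 : ∀ t, f0 t = if a < t then
        ((a - b * Real.exp (-y0)) ^ (-(α + β)) / realBeta (-(α + β)) α)
          * (t - a) ^ (α - 1) * (t - b * Real.exp (-y0)) ^ β else 0)
    (hf1 : ∀ t, f1 t = if a * Real.exp (-y1) < t then
        ((a * Real.exp (-y1) - b) ^ (-(α + β)) / realBeta (-(α + β)) (α + 1))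
          * (t - a * Real.exp (-y1)) ^ α * (t - b) ^ (β - 1) else 0) :
    (∀ t, 0 ≤ f0 t) ∧ (∀ t, 0 ≤ f1 t) ∧
    (∫ t, f0 t = 1) ∧ (∫ t, f1 t = 1) ∧
    (∀ t, a < t →
      f0 t = α * (t - a) ^ (α - 1)
        * ∫ u in Set.Ioi (t * Real.exp y0), (u * Real.exp (-y0) - a) ^ (-α) * f1 u) ∧
    (∀ t, a * Real.exp (-y1) < t →
      f1 t = -β * (t - b) ^ (β - 1)
        * ∫ u in a..(t * Real.exp y1), (u * Real.exp (-y1) - b) ^ (-β) * f0 u) := by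
  subst hy1
  have hs : 0 < Real.exp y0 := Real.exp_pos y0
  simp only [neg_neg, Real.exp_neg] at hf0 hf1 ⊢
  generalize Real.exp y0 = s at hs hf0 hf1 ⊢
  obtain ⟨B, rfl⟩ : ∃ B, b = B * s := ⟨b * s⁻¹, by field_simp⟩
  have hBA : B < a := by
    have hB : B * s < 0 := by rw [hbdef]; exact one_div_neg.2 hc1
    have ha : 0 < a := by rw [hadef]; positivity
    linarith [neg_of_mul_neg_left hB hs.le]
  have hα : 0 < α := by rw [hαdef]; positivity
  have hf0' : f0 = shiftedBetaPrimePDF a B α β := by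
    funext t
    rw [hf0, mul_inv_cancel_right₀ hs.ne']
    rfl
  have hf1' : f1 = shiftedBetaPrimePDF (a * s) (B * s) (α + 1) (β - 1) := by
    funext t
    rw [hf1, shiftedBetaPrimePDF, betaPrimeConst, show α + 1 + (β - 1) = α + β by ring,
      add_sub_cancel_right]
  subst hf0' hf1'
  have hBAs : B * s < a * s := mul_lt_mul_of_pos_right hBA hs
  have hαβ' : α + 1 + (β - 1) < 0 := by linarith
  exact ⟨shiftedBetaPrimePDF_nonneg hBA hα hconv,
    shiftedBetaPrimePDF_nonneg hBAs (by linarith) hαβ',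
    integral_shiftedBetaPrimePDF hBA hα hconv,
    integral_shiftedBetaPrimePDF hBAs (by linarith) hαβ',
    fun t ↦ shiftedBetaPrimePDF_eq_mul_integral_Ioi_mul hs hBA hα hconv,
    fun t ↦ shiftedBetaPrimePDF_mul_mul_add_one_eq_mul_integral hs hBA hα hconv⟩

/-- Theorem 3.5 (trends of opposite signs, formulae (3.21)): under the convergence
condition `λ0/c0 + λ1/c1 < 0`, the Beta-prime-type densities of the exponential
functional of a jump-telegraph process are probability densities and solve the
coupled integral system (3.22). -/
theorem jump_telegraph_exponential_functional_opposite_signs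
    (c0 c1 l0 l1 y0 y1 : ℝ) (hc1 : c1 < 0) (hc0 : 0 < c0)
    (hl0 : 0 < l0) (hl1 : 0 < l1) (hy0 : y0 ≤ 0) (hy1 : y1 = -y0)
    (a b α β : ℝ)
    (hadef : a = 1 / c0) (hbdef : b = 1 / c1)
    (hαdef : α = l0 / c0) (hβdef : β = l1 / c1)
    (hconv : α + β < 0)
    (f0 f1 : ℝ → ℝ)
    (hf0 : ∀ t, f0 t = if a < t then
        ((a - b * Real.exp (-y0)) ^ (-(α + β)) / realBeta (-(α + β)) α)
          * (t - a) ^ (α - 1) * (t - b * Real.exp (-y0)) ^ β else 0)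
    (hf1 : ∀ t, f1 t = if a * Real.exp (-y1) < t then
        ((a * Real.exp (-y1) - b) ^ (-(α + β)) / realBeta (-(α + β)) (α + 1))
          * (t - a * Real.exp (-y1)) ^ α * (t - b) ^ (β - 1) else 0) :
    (∀ t, 0 ≤ f0 t) ∧ (∀ t, 0 ≤ f1 t) ∧
    (∫ t, f0 t = 1) ∧ (∫ t, f1 t = 1) ∧
    (∀ t, a < t →
      f0 t = α * (t - a) ^ (α - 1)
        * ∫ u in Set.Ioi (t * Real.exp y0), (u * Real.exp (-y0) - a) ^ (-α) * f1 u) ∧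
    (∀ t, a * Real.exp (-y1) < t →
      f1 t = -β * (t - b) ^ (β - 1)
        * ∫ u in a..(t * Real.exp y1), (u * Real.exp (-y1) - b) ^ (-β) * f0 u) :=
  jump_telegraph_exponential_functional_opposite_signs_general c0 c1 l0 y0 y1 hc1 hc0 hl0 hy1 a b α
    β hadef hbdef hαdef hconv f0 f1 hf0 hf1
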